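/- Define G := λ u_y/J - P - |h|²/(8π) where (J,u,w,h,P) solve the Lagrangian MHD system (1.5) (equations for J_t, ρ₀u_t, ρ₀w_t, h_t, P_t as in (mhd)) with ρ₀ > 0 and J > 0 smooth. Then G satisfies G_t - (λ/J)(G_y/ρ₀)_y = -γ (u_y/J) G + ((2-γ)/(8π)) (u_y/J)|h|² - (γ-1)μ |w_y/J|² - (h·w_y)/(4π J) - (ν/(4π))((γ-1)|h_y/J|² + (h/J)·(h_y/J)_y). -/

import Mathlib

open MeasureTheory

section helpers
variable {E : Type*} [NormedAddCommGroup E] [NormedSpace ℝ E] {F : ℝ × ℝ → E}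

theorem hd1 (hF : ContDiff ℝ (⊤ : ℕ∞) F) (y t : ℝ) :
    HasDerivAt (fun z => F (z, t)) (fderiv ℝ F (y, t) (1, 0)) y :=
  (hF.differentiable (by simp) (y, t)).hasFDerivAt.comp_hasDerivAt y
    ((hasDerivAt_id y).prodMk (hasDerivAt_const y t))

theorem hd2 (hF : ContDiff ℝ (⊤ : ℕ∞) F) (y t : ℝ) :
    HasDerivAt (fun τ => F (y, τ)) (fderiv ℝ F (y, t) (0, 1)) t :=
  (hF.differentiable (by simp) (y, t)).hasFDerivAt.comp_hasDerivAt t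
    ((hasDerivAt_const t y).prodMk (hasDerivAt_id t))

theorem pdv_contDiff (hF : ContDiff ℝ (⊤ : ℕ∞) F) (v : ℝ × ℝ) :
    ContDiff ℝ (⊤ : ℕ∞) (fun p => fderiv ℝ F p v) :=
  (hF.fderiv_right (by simp)).clm_apply contDiff_const

theorem clairaut (hF : ContDiff ℝ (⊤ : ℕ∞) F) (y t : ℝ) :
    fderiv ℝ (fun p => fderiv ℝ F p (1, 0)) (y, t) (0, 1) =
      fderiv ℝ (fun p => fderiv ℝ F p (0, 1)) (y, t) (1, 0) := by
  have hd : Differentiable ℝ (fderiv ℝ F) := (hF.fderiv_right (m := (⊤ : ℕ∞)) (by simp)).differentiable (by simp)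
  have key := second_derivative_symmetric
    (fun x => ((hF.differentiable (by simp)) x).hasFDerivAt) ((hd (y, t)).hasFDerivAt)
    ((0, 1) : ℝ × ℝ) ((1, 0) : ℝ × ℝ)
  have e : ∀ v w : ℝ × ℝ, fderiv ℝ (fun p => fderiv ℝ F p v) (y, t) w =
      fderiv ℝ (fderiv ℝ F) (y, t) w v := by
    intro v w
    rw [fderiv_clm_apply (hd (y, t)) (differentiableAt_const v)]
    simp
  rw [e, e, key]

theorem deriv_swap (hF : ContDiff ℝ (⊤ : ℕ∞) F) (y t : ℝ) :
    HasDerivAt (fun τ => deriv (fun z => F (z, τ)) y)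
      (deriv (fun z => deriv (fun τ => F (z, τ)) t) y) t := by
  have e1 : (fun τ => deriv (fun z => F (z, τ)) y) = fun τ => fderiv ℝ F (y, τ) (1, 0) :=
    funext fun τ => (hd1 hF y τ).deriv
  have e2 : (fun z => deriv (fun τ => F (z, τ)) t) = fun z => fderiv ℝ F (z, t) (0, 1) :=
    funext fun z => (hd2 hF z t).deriv
  rw [e1, e2]
  have h2 : deriv (fun z => fderiv ℝ F (z, t) (0, 1)) y =
      fderiv ℝ (fun p => fderiv ℝ F p (0, 1)) (y, t) (1, 0) :=
    (hd1 (pdv_contDiff hF (0, 1)) y t).deriv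
  rw [h2, ← clairaut hF y t]
  exact hd2 (pdv_contDiff hF (1, 0)) y t

end helpers

/-- Evolution equation (ge) of the effective viscous flux `G := λ u_y/J - P - |h|²/(8π)`
for solutions of the Lagrangian planar MHD system (mhd):
`G_t - (λ/J)(G_y/ρ₀)_y = -γ(u_y/J)G + ((2-γ)/(8π))(u_y/J)|h|² - (γ-1)μ|w_y/J|²
  - (h·w_y)/(4πJ) - (ν/(4π))((γ-1)|h_y/J|² + (h/J)·(h_y/J)_y)`. -/


theorem stmt12 (lam μ ν γ : ℝ) (hlam : 0 < lam) (hμ : 0 < μ)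
    (ρ₀ : ℝ → ℝ) (J u P G : ℝ → ℝ → ℝ) (w h : ℝ → ℝ → EuclideanSpace ℝ (Fin 2))
    (hρpos : ∀ y, 0 < ρ₀ y) (hJpos : ∀ y t, 0 < J y t)
    (hρs : ContDiff ℝ (⊤ : ℕ∞) ρ₀)
    (hJs : ContDiff ℝ (⊤ : ℕ∞) (Function.uncurry J)) (hus : ContDiff ℝ (⊤ : ℕ∞) (Function.uncurry u))
    (hPs : ContDiff ℝ (⊤ : ℕ∞) (Function.uncurry P)) (hws : ContDiff ℝ (⊤ : ℕ∞) (Function.uncurry w))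
    (hhs : ContDiff ℝ (⊤ : ℕ∞) (Function.uncurry h))
    -- definition of G
    (hG : ∀ y t, G y t =
      lam * deriv (fun z => u z t) y / J y t - P y t - ‖h y t‖ ^ 2 / (8 * Real.pi))
    -- J_t = u_y
    (hJt : ∀ y t, deriv (fun τ => J y τ) t = deriv (fun z => u z t) y)
    -- ρ₀ u_t + P_y + h·h_y/(4π) = λ (u_y/J)_y
    (hut : ∀ y t, ρ₀ y * deriv (fun τ => u y τ) t + deriv (fun z => P z t) y +
        (1 / (4 * Real.pi)) * (inner ℝ (h y t) (deriv (fun z => h z t) y) : ℝ) =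
      lam * deriv (fun z => deriv (fun z' => u z' t) z / J z t) y)
    -- ρ₀ w_t - h_y/(4π) = μ (w_y/J)_y
    (hwt : ∀ y t, ρ₀ y • deriv (fun τ => w y τ) t -
        (1 / (4 * Real.pi)) • deriv (fun z => h z t) y =
      μ • deriv (fun z => (J z t)⁻¹ • deriv (fun z' => w z' t) z) y)
    -- h_t + (u_y/J) h - w_y/J = (ν/J)(h_y/J)_y
    (hht : ∀ y t, deriv (fun τ => h y τ) t +
        (deriv (fun z => u z t) y / J y t) • h y t -
        (J y t)⁻¹ • deriv (fun z => w z t) y =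
      (ν / J y t) • deriv (fun z => (J z t)⁻¹ • deriv (fun z' => h z' t) z) y)
    -- P_t + γ(u_y/J)P = (γ-1)(λ|u_y/J|² + μ|w_y/J|² + (ν/(4π))|h_y/J|²)
    (hPt : ∀ y t, deriv (fun τ => P y τ) t +
        γ * (deriv (fun z => u z t) y / J y t) * P y t =
      (γ - 1) * (lam * (deriv (fun z => u z t) y / J y t) ^ 2 +
        μ * ‖(J y t)⁻¹ • deriv (fun z => w z t) y‖ ^ 2 +
        (ν / (4 * Real.pi)) * ‖(J y t)⁻¹ • deriv (fun z => h z t) y‖ ^ 2)) :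
    ∀ y t,
      deriv (fun τ => G y τ) t -
          (lam / J y t) * deriv (fun z => (ρ₀ z)⁻¹ * deriv (fun z' => G z' t) z) y =
        -γ * (deriv (fun z => u z t) y / J y t) * G y t +
          ((2 - γ) / (8 * Real.pi)) * (deriv (fun z => u z t) y / J y t) * ‖h y t‖ ^ 2 -
          (γ - 1) * μ * ‖(J y t)⁻¹ • deriv (fun z => w z t) y‖ ^ 2 -
          (inner ℝ (h y t) (deriv (fun z => w z t) y) : ℝ) / (4 * Real.pi * J y t) -
          (ν / (4 * Real.pi)) *
            ((γ - 1) * ‖(J y t)⁻¹ • deriv (fun z => h z t) y‖ ^ 2 +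
              (inner ℝ ((J y t)⁻¹ • h y t)
                (deriv (fun z => (J z t)⁻¹ • deriv (fun z' => h z' t) z) y) : ℝ)) := by
  intro y t
  have hJne : ∀ z τ, J z τ ≠ 0 := fun z τ => (hJpos z τ).ne'
  have hπ : Real.pi ≠ 0 := Real.pi_ne_zero
  -- Step 1: spatial derivative of G equals ρ₀ u_t
  have hGy : ∀ z, deriv (fun z' => G z' t) z = ρ₀ z * deriv (fun τ => u z τ) t := by
    intro z
    have eU : (fun a => deriv (fun z' => u z' t) a) =
        fun a => fderiv ℝ (Function.uncurry u) (a, t) (1, 0) :=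
      funext fun a => (hd1 hus a t).deriv
    have dU1 : DifferentiableAt ℝ (fun a => deriv (fun z' => u z' t) a) z := by
      rw [eU]
      exact (((pdv_contDiff hus (1, 0)).comp
        (contDiff_id.prodMk contDiff_const)).differentiable (by simp) z)
    have dJ1 : DifferentiableAt ℝ (fun a => J a t) z := (hd1 hJs z t).differentiableAt
    have hq : HasDerivAt (fun a => deriv (fun z' => u z' t) a / J a t)
        (deriv (fun a => deriv (fun z' => u z' t) a / J a t) z) z :=
      (dU1.div dJ1 (hJne z t)).hasDerivAt
    have dP1 : HasDerivAt (fun a => P a t) (deriv (fun a => P a t) z) z :=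
      (hd1 hPs z t).differentiableAt.hasDerivAt
    have dh1 : HasDerivAt (fun a => h a t) (deriv (fun a => h a t) z) z :=
      (hd1 hhs z t).differentiableAt.hasDerivAt
    have dnorm : HasDerivAt (fun a => ‖h a t‖ ^ 2)
        ((inner ℝ (h z t) (deriv (fun a => h a t) z) : ℝ) +
          (inner ℝ (deriv (fun a => h a t) z) (h z t) : ℝ)) z := by
      have e : (fun a => ‖h a t‖ ^ 2) = fun a => (inner ℝ (h a t) (h a t) : ℝ) :=
        funext fun a => (real_inner_self_eq_norm_sq _).symm
      rw [e]
      exact dh1.inner ℝ dh1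
    have eG : (fun z' => G z' t) =
        fun z' => lam * (deriv (fun a => u a t) z' / J z' t) - P z' t -
          ‖h z' t‖ ^ 2 / (8 * Real.pi) :=
      funext fun z' => by rw [hG z' t]; ring
    have hGd : HasDerivAt (fun z' => G z' t)
        (lam * deriv (fun a => deriv (fun z' => u z' t) a / J a t) z -
          deriv (fun a => P a t) z -
          ((inner ℝ (h z t) (deriv (fun a => h a t) z) : ℝ) +
            (inner ℝ (deriv (fun a => h a t) z) (h z t) : ℝ)) / (8 * Real.pi)) z := by
      rw [eG]
      exact ((hq.const_mul lam).sub dP1).sub (dnorm.div_const _)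
    rw [hGd.deriv, ← hut z t, real_inner_comm (deriv (fun a => h a t) z) (h z t)]
    field_simp
    ring
  -- Step 2: the inner function is u_t
  have hin : (fun z => (ρ₀ z)⁻¹ * deriv (fun z' => G z' t) z) =
      fun z => deriv (fun τ => u z τ) t := by
    funext z
    rw [hGy z, inv_mul_cancel_left₀ (hρpos z).ne']
  -- Step 3: time derivative of G
  have dA : HasDerivAt (fun τ => deriv (fun z => u z τ) y)
      (deriv (fun z => deriv (fun τ => u z τ) t) y) t := deriv_swap hus y t
  have dJt : HasDerivAt (fun τ => J y τ) (deriv (fun z => u z t) y) t := by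
    have hb : HasDerivAt (fun τ => J y τ) (deriv (fun τ => J y τ) t) t :=
      (hd2 hJs y t).differentiableAt.hasDerivAt
    rwa [hJt y t] at hb
  have dPt : HasDerivAt (fun τ => P y τ) (deriv (fun τ => P y τ) t) t :=
    (hd2 hPs y t).differentiableAt.hasDerivAt
  have dht : HasDerivAt (fun τ => h y τ) (deriv (fun τ => h y τ) t) t :=
    (hd2 hhs y t).differentiableAt.hasDerivAt
  have dnorm_t : HasDerivAt (fun τ => ‖h y τ‖ ^ 2)
      ((inner ℝ (h y t) (deriv (fun τ => h y τ) t) : ℝ) +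
        (inner ℝ (deriv (fun τ => h y τ) t) (h y t) : ℝ)) t := by
    have e : (fun τ => ‖h y τ‖ ^ 2) = fun τ => (inner ℝ (h y τ) (h y τ) : ℝ) :=
      funext fun τ => (real_inner_self_eq_norm_sq _).symm
    rw [e]
    exact dht.inner ℝ dht
  have eGt : (fun τ => G y τ) =
      fun τ => lam * (deriv (fun z => u z τ) y / J y τ) - P y τ -
        ‖h y τ‖ ^ 2 / (8 * Real.pi) :=
    funext fun τ => by rw [hG y τ]; ring
  have hGt : HasDerivAt (fun τ => G y τ)
      (lam * ((deriv (fun z => deriv (fun τ => u z τ) t) y * J y t -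
          deriv (fun z => u z t) y * deriv (fun z => u z t) y) / J y t ^ 2) -
        deriv (fun τ => P y τ) t -
        ((inner ℝ (h y t) (deriv (fun τ => h y τ) t) : ℝ) +
          (inner ℝ (deriv (fun τ => h y τ) t) (h y t) : ℝ)) / (8 * Real.pi)) t := by
    rw [eGt]
    exact (((dA.div dJt (hJne y t)).const_mul lam).sub dPt).sub (dnorm_t.div_const _)
  rw [hGt.deriv, hin]
  -- Step 4: scalar identities from hht and hPt
  have h1 : (inner ℝ (h y t) (deriv (fun τ => h y τ) t) : ℝ) +
      deriv (fun z => u z t) y / J y t * ‖h y t‖ ^ 2 -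
      (J y t)⁻¹ * (inner ℝ (h y t) (deriv (fun z => w z t) y) : ℝ) =
      ν / J y t * (inner ℝ (h y t)
        (deriv (fun z => (J z t)⁻¹ • deriv (fun z' => h z' t) z) y) : ℝ) := by
    have h0 := congrArg (fun v : EuclideanSpace ℝ (Fin 2) => (inner ℝ (h y t) v : ℝ)) (hht y t)
    simpa only [inner_add_right, inner_sub_right, real_inner_smul_right,
      real_inner_self_eq_norm_sq] using h0
  have eInner : (inner ℝ (h y t) (deriv (fun τ => h y τ) t) : ℝ) =
      ν / J y t * (inner ℝ (h y t)
        (deriv (fun z => (J z t)⁻¹ • deriv (fun z' => h z' t) z) y) : ℝ) -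
      deriv (fun z => u z t) y / J y t * ‖h y t‖ ^ 2 +
      (J y t)⁻¹ * (inner ℝ (h y t) (deriv (fun z => w z t) y) : ℝ) := by linarith
  have ePt : deriv (fun τ => P y τ) t =
      (γ - 1) * (lam * (deriv (fun z => u z t) y / J y t) ^ 2 +
        μ * ‖(J y t)⁻¹ • deriv (fun z => w z t) y‖ ^ 2 +
        (ν / (4 * Real.pi)) * ‖(J y t)⁻¹ • deriv (fun z => h z t) y‖ ^ 2) -
      γ * (deriv (fun z => u z t) y / J y t) * P y t := by linarith [hPt y t]
  rw [real_inner_comm (h y t) (deriv (fun τ => h y τ) t), eInner, ePt, hG y t,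
    real_inner_smul_left]
  have hb : J y t ≠ 0 := hJne y t
  set a := deriv (fun z => u z t) y with ha
  set m := deriv (fun z => deriv (fun τ => u z τ) t) y with hm
  set b := J y t with hbdef
  set p := P y t with hp
  set n2 := ‖h y t‖ ^ 2 with hn2
  set w2 := ‖b⁻¹ • deriv (fun z => w z t) y‖ ^ 2 with hw2
  set k2 := ‖b⁻¹ • deriv (fun z => h z t) y‖ ^ 2 with hk2
  set iw := (inner ℝ (h y t) (deriv (fun z => w z t) y) : ℝ) with hiw
  set ik := (inner ℝ (h y t) (deriv (fun z => (J z t)⁻¹ • deriv (fun z' => h z' t) z) y) : ℝ) with hik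
  field_simp [hπ]
  ring
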